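/- Let A ∈ ℝ^{m×n}, S ∈ ℝ^{m×s}, and define Z = S (S^T A A^T S)^† S^T, where † denotes the Moore–Penrose pseudoinverse. Then Z A A^T Z = Z; consequently, for the stochastic convex quadratic h(x) = ½ (Ax − b)^T Z (Ax − b) with gradient ∇h(x) = A^T Z (Ax − b), one has h(x) = ½ ‖∇h(x)‖₂² for all x ∈ ℝⁿ, and if b = A x̂ then additionally h(x) = ½ ⟨∇h(x), x − x̂⟩. -/

import Mathlib

open Matrix Finset

noncomputable section

/-- Euclidean dot product of two vectors. -/
def dot {n : ℕ} (x y : Fin n → ℝ) : ℝ := ∑ j, x j * y j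

/-- Squared Euclidean norm of a vector. -/
def norm2Sq {n : ℕ} (x : Fin n → ℝ) : ℝ := ∑ j, x j ^ 2

/-- ℓ¹ norm of a vector. -/
def l1Norm {n : ℕ} (x : Fin n → ℝ) : ℝ := ∑ j, |x j|

/-- Squared Euclidean norm of the i-th row of a matrix. -/
def rowNormSq {m n : ℕ} (A : Matrix (Fin m) (Fin n) ℝ) (i : Fin m) : ℝ := ∑ j, A i j ^ 2

/-- Squared Frobenius norm of a matrix. -/
def frobSq {m n : ℕ} (A : Matrix (Fin m) (Fin n) ℝ) : ℝ := ∑ i, ∑ j, A i j ^ 2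

/-- Largest singular value (spectral norm) of a matrix:  sup over `x ≠ 0` of `‖Ax‖₂/‖x‖₂`. -/
def sigmaMax {m n : ℕ} (A : Matrix (Fin m) (Fin n) ℝ) : ℝ :=
  sSup {t : ℝ | ∃ x : Fin n → ℝ, x ≠ 0 ∧
    t = Real.sqrt (norm2Sq (A.mulVec x)) / Real.sqrt (norm2Sq x)}

/-- `σ̃_min(A)`: the minimum over nonzero column-submatrices `A_J` of the smallest
singular value `σ_min(A_J) = min_{x ≠ 0, supp x ⊆ J} ‖Ax‖₂/‖x‖₂`. -/
def sigmaTildeMin {m n : ℕ} (A : Matrix (Fin m) (Fin n) ℝ) : ℝ :=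
  sInf {t : ℝ | ∃ J : Finset (Fin n), (∃ i j, j ∈ J ∧ A i j ≠ 0) ∧
    ∃ x : Fin n → ℝ, x ≠ 0 ∧ (∀ j ∉ J, x j = 0) ∧
      t = Real.sqrt (norm2Sq (A.mulVec x)) / Real.sqrt (norm2Sq x)}

/-- `|x|_min`: the smallest absolute value of the nonzero entries of `x`. -/
def minAbs {n : ℕ} (x : Fin n → ℝ) : ℝ := sInf {t : ℝ | ∃ j, x j ≠ 0 ∧ t = |x j|}

/-- Componentwise soft shrinkage operator `S_λ(x) = max{|x| - λ, 0}·sign(x)`. -/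
def softShrink {n : ℕ} (lam : ℝ) (x : Fin n → ℝ) : Fin n → ℝ :=
  fun j => Real.sign (x j) * max (|x j| - lam) 0

/-- The objective `f(x) = λ‖x‖₁ + ½‖x‖₂²`. -/
def fObj {n : ℕ} (lam : ℝ) (x : Fin n → ℝ) : ℝ := lam * l1Norm x + norm2Sq x / 2

/-- `g` is a subgradient of `f` at `x`. -/
def IsSubgrad {n : ℕ} (f : (Fin n → ℝ) → ℝ) (x g : Fin n → ℝ) : Prop :=
  ∀ y, f x + dot g (y - x) ≤ f y

/-- Bregman distance `D_f^{x*}(x, y) = f(y) - f(x) - ⟨x*, y - x⟩`. -/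
def breg {n : ℕ} (f : (Fin n → ℝ) → ℝ) (xstar x y : Fin n → ℝ) : ℝ :=
  f y - f x - dot xstar (y - x)

/-- `X` is the Moore–Penrose pseudoinverse of `B` (Penrose equations). -/
def IsMoorePenrose {s : ℕ} (B X : Matrix (Fin s) (Fin s) ℝ) : Prop :=
  B * X * B = B ∧ X * B * X = X ∧ (B * X)ᵀ = B * X ∧ (X * B)ᵀ = X * B

/-! The pseudoinverse of a symmetric matrix is symmetric (by uniqueness of the pseudoinverse),
so `Z` is symmetric, and the Penrose equation `X B X = X` for `B = Sᵀ A Aᵀ S` gives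
`Z A Aᵀ Z = Z`. Hence `rᵀ Z r = rᵀ Zᵀ A Aᵀ Z r = ‖Aᵀ Z r‖²` for every residual `r = Ax − b`;
if `r = A(x − x̂)`, moving `A` across the inner product gives `rᵀ Z r = ⟨Aᵀ Z r, x − x̂⟩`. -/

namespace IsMoorePenrose

variable {s : ℕ} {B X Y : Matrix (Fin s) (Fin s) ℝ}

theorem transpose (hX : IsMoorePenrose B X) : IsMoorePenrose Bᵀ Xᵀ := by
  obtain ⟨h₁, h₂, h₃, h₄⟩ := hX
  refine ⟨?_, ?_, ?_, ?_⟩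
  · simpa only [transpose_mul, Matrix.mul_assoc] using congrArg Matrix.transpose h₁
  · simpa only [transpose_mul, Matrix.mul_assoc] using congrArg Matrix.transpose h₂
  · rw [← transpose_mul, transpose_transpose, h₄]
  · rw [← transpose_mul, transpose_transpose, h₃]

theorem mul_left_eq (hX : IsMoorePenrose B X) (hY : IsMoorePenrose B Y) : B * X = B * Y :=
  calc B * X = (B * X)ᵀ := hX.2.2.1.symm
    _ = (B * Y * B * X)ᵀ := by rw [hY.1]
    _ = (B * X)ᵀ * (B * Y)ᵀ := by simp only [transpose_mul, Matrix.mul_assoc]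
    _ = B * X * B * Y := by rw [hX.2.2.1, hY.2.2.1, Matrix.mul_assoc (B * X)]
    _ = B * Y := by rw [hX.1]

theorem mul_right_eq (hX : IsMoorePenrose B X) (hY : IsMoorePenrose B Y) : X * B = Y * B :=
  transpose_injective <| by
    simpa only [transpose_mul] using hX.transpose.mul_left_eq hY.transpose

theorem unique (hX : IsMoorePenrose B X) (hY : IsMoorePenrose B Y) : X = Y :=
  calc X = X * (B * X) := by rw [← Matrix.mul_assoc, hX.2.1]
    _ = X * B * Y := by rw [hX.mul_left_eq hY, Matrix.mul_assoc]
    _ = Y := by rw [hX.mul_right_eq hY, hY.2.1]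

theorem transpose_eq_self (hB : Bᵀ = B) (hX : IsMoorePenrose B X) : Xᵀ = X :=
  (hB ▸ hX.transpose).unique hX

end IsMoorePenrose

theorem dot_eq_dotProduct {n : ℕ} (x y : Fin n → ℝ) : dot x y = x ⬝ᵥ y := rfl

theorem norm2Sq_eq_dotProduct {n : ℕ} (x : Fin n → ℝ) : norm2Sq x = x ⬝ᵥ x := by
  simp only [norm2Sq, dotProduct, sq]

theorem dotProduct_mulVec_eq_of_mul_mul_transpose_mul_eq {R l m : Type*} [CommSemiring R]
    [Fintype l] [Fintype m] {Z : Matrix m m R} {A : Matrix m l R}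
    (hZ : Zᵀ = Z) (hZA : Z * A * Aᵀ * Z = Z) (r : m → R) :
    r ⬝ᵥ (Z *ᵥ r) = (Aᵀ *ᵥ (Z *ᵥ r)) ⬝ᵥ (Aᵀ *ᵥ (Z *ᵥ r)) := by
  calc r ⬝ᵥ (Z *ᵥ r) = r ⬝ᵥ (Zᵀ *ᵥ (A *ᵥ (Aᵀ *ᵥ (Z *ᵥ r)))) := by
        rw [hZ, mulVec_mulVec, mulVec_mulVec, mulVec_mulVec, hZA]
    _ = (Z *ᵥ r) ⬝ᵥ (A *ᵥ (Aᵀ *ᵥ (Z *ᵥ r))) := by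
        rw [dotProduct_transpose_mulVec, dotProduct_comm]
    _ = (Aᵀ *ᵥ (Z *ᵥ r)) ⬝ᵥ (Aᵀ *ᵥ (Z *ᵥ r)) :=
        (dotProduct_transpose_mulVec _ _ _).symm

/-- For `Z = S (Sᵀ A Aᵀ S)† Sᵀ` one has `Z A Aᵀ Z = Z`; consequently the
sketched quadratic `h(x) = ½(Ax − b)ᵀ Z (Ax − b)` with gradient `∇h(x) = Aᵀ Z (Ax − b)`
satisfies `h(x) = ½‖∇h(x)‖₂²`, and if `b = A x̂` then also `h(x) = ½⟨∇h(x), x − x̂⟩`. -/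
theorem sketch_and_project_quadratic {m n s : ℕ}
    (A : Matrix (Fin m) (Fin n) ℝ) (S : Matrix (Fin m) (Fin s) ℝ) (b : Fin m → ℝ)
    (X : Matrix (Fin s) (Fin s) ℝ) (hX : IsMoorePenrose (Sᵀ * A * Aᵀ * S) X) :
    let Z : Matrix (Fin m) (Fin m) ℝ := S * X * Sᵀ
    Z * A * Aᵀ * Z = Z ∧
    (∀ x : Fin n → ℝ,
        1 / 2 * dot (A.mulVec x - b) (Z.mulVec (A.mulVec x - b))
          = 1 / 2 * norm2Sq (Aᵀ.mulVec (Z.mulVec (A.mulVec x - b)))) ∧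
    (∀ xhat : Fin n → ℝ, b = A.mulVec xhat →
      ∀ x : Fin n → ℝ,
        1 / 2 * dot (A.mulVec x - b) (Z.mulVec (A.mulVec x - b))
          = 1 / 2 * dot (Aᵀ.mulVec (Z.mulVec (A.mulVec x - b))) (x - xhat)) := by
  intro Z
  have hXsymm : Xᵀ = X :=
    hX.transpose_eq_self (by simp only [transpose_mul, transpose_transpose, Matrix.mul_assoc])
  have hZsymm : Zᵀ = Z := by
    simp only [Z, transpose_mul, transpose_transpose, hXsymm, Matrix.mul_assoc]
  have hZA : Z * A * Aᵀ * Z = Z :=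
    calc Z * A * Aᵀ * Z = S * (X * (Sᵀ * A * Aᵀ * S) * X) * Sᵀ := by
          simp only [Z, Matrix.mul_assoc]
      _ = S * X * Sᵀ := by rw [hX.2.1]
  refine ⟨hZA, fun x => ?_, fun xhat hb x => ?_⟩
  · rw [dot_eq_dotProduct, norm2Sq_eq_dotProduct,
      dotProduct_mulVec_eq_of_mul_mul_transpose_mul_eq hZsymm hZA]
  · have hr : A *ᵥ x - b = A *ᵥ (x - xhat) := by rw [hb, mulVec_sub]
    rw [dot_eq_dotProduct, dot_eq_dotProduct, dotProduct_comm (Aᵀ *ᵥ _),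
      dotProduct_transpose_mulVec, ← hr, dotProduct_comm]
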